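/- arXiv:2401.06635 — 5 statements merged into one kernel-verified Lean document; each statement's English description precedes it below -/
import Mathlib

section
/- For bounded operators A, B on a Banach space, the Lie–Trotter error admits the integral representation exp(tA)exp(tB) − exp(t(A+B)) = ∫₀^t exp((t−τ)(A+B)) ( ∫₀^τ exp((τ−ξ)A)[A,B]exp(ξA) dξ ) exp(τB) dτ for all t ≥ 0. -/
open NormedSpace

section aux

variable {𝔸 : Type*} [NormedRing 𝔸] [NormedAlgebra ℝ 𝔸] [CompleteSpace 𝔸]

lemma cont_exp_smul (A : 𝔸) : Continuous (fun s : ℝ => exp (s • A)) :=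
  continuous_iff_continuousAt.2 fun s => (hasDerivAt_exp_smul_const (𝕂 := ℝ) A s).continuousAt

lemma cont_exp_affine (A : 𝔸) (c : ℝ) : Continuous (fun s : ℝ => exp ((c - s) • A)) :=
  (cont_exp_smul A).comp (continuous_const.sub continuous_id)

lemma hasDerivAt_exp_sub (A : 𝔸) (c s : ℝ) :
    HasDerivAt (fun u : ℝ => exp ((c - u) • A))
      (-(exp ((c - s) • A) * A)) s := by
  have h1 : HasDerivAt (fun u : ℝ => c - u) (-1) s := by
    simpa using (hasDerivAt_id s).const_sub c
  have h2 := (hasDerivAt_exp_smul_const (𝕂 := ℝ) A (c - s)).scomp s h1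
  simpa [Function.comp_def] using h2

/-- The commutator integral identity. -/
lemma comm_exp_integral (A B : 𝔸) (τ : ℝ) :
    exp (τ • A) * B - B * exp (τ • A)
      = ∫ ξ in (0:ℝ)..τ, exp ((τ - ξ) • A) * (A * B - B * A) * exp (ξ • A) := by
  have hderiv : ∀ ξ ∈ Set.uIcc (0:ℝ) τ,
      HasDerivAt (fun u : ℝ => exp ((τ - u) • A) * B * exp (u • A))
        (-(exp ((τ - ξ) • A) * (A * B - B * A) * exp (ξ • A))) ξ := by
    intro ξ _
    have h1 := (hasDerivAt_exp_sub A τ ξ).mul_const B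
    have h2 := h1.mul (hasDerivAt_exp_smul_const' (𝕂 := ℝ) A ξ)
    convert h2 using 1
    · rfl
    have hcomm : A * exp (ξ • A) = exp (ξ • A) * A := by
      rw [← hasDerivAt_exp_smul_const (𝕂 := ℝ) A ξ |>.deriv,
          ← hasDerivAt_exp_smul_const' (𝕂 := ℝ) A ξ |>.deriv]
    noncomm_ring [hcomm]
  have hint : IntervalIntegrable
      (fun ξ => -(exp ((τ - ξ) • A) * (A * B - B * A) * exp (ξ • A)))
      MeasureTheory.volume 0 τ :=
    (((cont_exp_affine A τ).mul continuous_const).mul (cont_exp_smul A)).neg.intervalIntegrable _ _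
  have := intervalIntegral.integral_eq_sub_of_hasDerivAt hderiv hint
  rw [intervalIntegral.integral_neg] at this
  have h0 : (fun u : ℝ => exp ((τ - u) • A) * B * exp (u • A)) τ
      - (fun u : ℝ => exp ((τ - u) • A) * B * exp (u • A)) 0 = - (exp (τ • A) * B - B * exp (τ • A)) := by
    simp [exp_zero]
  rw [h0] at this
  exact (neg_inj.mp this).symm

end aux

theorem lieTrotter_error_integral {𝔸 : Type*} [NormedRing 𝔸] [NormedAlgebra ℝ 𝔸]
    [CompleteSpace 𝔸] (A B : 𝔸) (t : ℝ) (ht : 0 ≤ t) :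
    exp (t • A) * exp (t • B) - exp (t • (A + B))
      = ∫ τ in (0:ℝ)..t, exp ((t - τ) • (A + B))
          * (∫ ξ in (0:ℝ)..τ, exp ((τ - ξ) • A) * (A * B - B * A) * exp (ξ • A))
          * exp (τ • B) := by
  set C := A + B with hC
  have hderiv : ∀ τ ∈ Set.uIcc (0:ℝ) t,
      HasDerivAt (fun u : ℝ => exp ((t - u) • C) * exp (u • A) * exp (u • B))
        (exp ((t - τ) • C) * (exp (τ • A) * B - B * exp (τ • A)) * exp (τ • B)) τ := by
    intro τ _
    have h1 := (hasDerivAt_exp_sub C t τ).mul (hasDerivAt_exp_smul_const' (𝕂 := ℝ) A τ)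
    have h2 := h1.mul (hasDerivAt_exp_smul_const' (𝕂 := ℝ) B τ)
    convert h2 using 1
    · rfl
    have hcommA : A * exp (τ • A) = exp (τ • A) * A := by
      rw [← hasDerivAt_exp_smul_const (𝕂 := ℝ) A τ |>.deriv,
          ← hasDerivAt_exp_smul_const' (𝕂 := ℝ) A τ |>.deriv]
    simp only [Pi.mul_apply]
    rw [hC]
    noncomm_ring [hcommA]
  have hint : IntervalIntegrable
      (fun τ => exp ((t - τ) • C) * (exp (τ • A) * B - B * exp (τ • A)) * exp (τ • B))
      MeasureTheory.volume 0 t :=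
    (((cont_exp_affine C t).mul (((cont_exp_smul A).mul continuous_const).sub
      (continuous_const.mul (cont_exp_smul A)))).mul (cont_exp_smul B)).intervalIntegrable _ _
  have hFTC := intervalIntegral.integral_eq_sub_of_hasDerivAt hderiv hint
  have hends : (fun u : ℝ => exp ((t - u) • C) * exp (u • A) * exp (u • B)) t
      - (fun u : ℝ => exp ((t - u) • C) * exp (u • A) * exp (u • B)) 0
      = exp (t • A) * exp (t • B) - exp (t • C) := by
    simp [exp_zero, mul_assoc]
  rw [hends] at hFTC
  rw [← hFTC]
  apply intervalIntegral.integral_congr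
  intro τ _
  simp only [← comm_exp_integral A B]
end

section
/- For bounded operators A, B on a Banach space with ‖exp(sA)‖ ≤ 1, ‖exp(sB)‖ ≤ 1, and ‖exp(s(A+B))‖ ≤ 1 for all s ∈ [0,t], the Lie–Trotter splitting error satisfies ‖exp(tA)exp(tB) − exp(t(A+B))‖ ≤ (t²/2)·‖[A,B]‖. -/
open NormedSpace

theorem lieTrotter_error_bound {𝔸 : Type*} [NormedRing 𝔸] [NormedAlgebra ℝ 𝔸]
    [CompleteSpace 𝔸] (A B : 𝔸) (t : ℝ) (ht : 0 ≤ t)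
    (hA : ∀ s ∈ Set.Icc (0:ℝ) t, ‖exp (s • A)‖ ≤ 1)
    (hB : ∀ s ∈ Set.Icc (0:ℝ) t, ‖exp (s • B)‖ ≤ 1)
    (hAB : ∀ s ∈ Set.Icc (0:ℝ) t, ‖exp (s • (A + B))‖ ≤ 1) :
    ‖exp (t • A) * exp (t • B) - exp (t • (A + B))‖
      ≤ t ^ 2 / 2 * ‖A * B - B * A‖ := by
  set K := ‖A * B - B * A‖ with hKdef
  -- inner commutator bound
  have inner : ∀ s ∈ Set.Icc (0:ℝ) t,
      ‖A * exp (s • B) - exp (s • B) * A‖ ≤ s * K := by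
    intro s hs
    set G : ℝ → 𝔸 := fun u => exp (u • B) * (A * exp ((s - u) • B)) with hGdef
    have hG : ∀ u : ℝ, HasDerivAt G
        (exp (u • B) * (B * A - A * B) * exp ((s - u) • B)) u := by
      intro u
      have h1 : HasDerivAt (fun u : ℝ => exp (u • B)) (exp (u • B) * B) u :=
        hasDerivAt_exp_smul_const B u
      have hlin : HasDerivAt (fun u : ℝ => s - u) (0 - 1) u :=
        (hasDerivAt_const u s).sub (hasDerivAt_id u)
      have h2 : HasDerivAt (fun u : ℝ => exp ((s - u) • B))
          (-(B * exp ((s - u) • B))) u := by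
        have := HasDerivAt.scomp u (hasDerivAt_exp_smul_const' (𝕂 := ℝ) B (s - u)) hlin
        simpa [Function.comp_def] using this
      have h3 : HasDerivAt (fun u : ℝ => A * exp ((s - u) • B))
          (A * -(B * exp ((s - u) • B))) u := h2.const_mul A
      have := h1.mul h3
      convert this using 1
      · rfl
      noncomm_ring
    have key := norm_image_sub_le_of_norm_deriv_le_segment'
      (f := G) (f' := fun u => exp (u • B) * (B * A - A * B) * exp ((s - u) • B))
      (a := 0) (b := s) (C := K)
      (fun u _ => (hG u).hasDerivWithinAt)
      (fun u hu => by
        have hu1 : ‖exp (u • B)‖ ≤ 1 := hB u ⟨hu.1, hu.2.le.trans hs.2⟩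
        have hu2 : ‖exp ((s - u) • B)‖ ≤ 1 :=
          hB (s - u) ⟨by linarith [hu.2.le], by linarith [hs.2, hu.1]⟩
        have hK' : ‖B * A - A * B‖ = K := by rw [hKdef, norm_sub_rev]
        have h4 : ‖exp (u • B) * (B * A - A * B)‖ ≤ 1 * K :=
          (norm_mul_le _ _).trans (mul_le_mul hu1 hK'.le (norm_nonneg _) zero_le_one)
        have h5 : ‖exp (u • B) * (B * A - A * B) * exp ((s - u) • B)‖ ≤ 1 * K * 1 :=
          (norm_mul_le _ _).trans (mul_le_mul h4 hu2 (norm_nonneg _)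
            (by positivity))
        linarith)
      s ⟨le_refl 0 |>.trans hs.1, le_rfl⟩
    have hGs : G s = exp (s • B) * A := by simp [hGdef]
    have hG0 : G 0 = A * exp (s • B) := by simp [hGdef]
    rw [hGs, hG0] at key
    calc ‖A * exp (s • B) - exp (s • B) * A‖
        = ‖exp (s • B) * A - A * exp (s • B)‖ := norm_sub_rev _ _
      _ ≤ K * (s - 0) := key
      _ = s * K := by ring
  -- outer argument
  set C := A + B with hCdef
  set F : ℝ → 𝔸 := fun s => exp (s • A) * exp (s • B) * exp ((t - s) • C) with hFdef
  set D : ℝ → 𝔸 := fun s =>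
    exp (s • A) * (A * exp (s • B) - exp (s • B) * A) * exp ((t - s) • C) with hDdef
  have hF : ∀ s : ℝ, HasDerivAt F (D s) s := by
    intro s
    have h1 : HasDerivAt (fun s : ℝ => exp (s • A)) (exp (s • A) * A) s :=
      hasDerivAt_exp_smul_const A s
    have h2 : HasDerivAt (fun s : ℝ => exp (s • B)) (exp (s • B) * B) s :=
      hasDerivAt_exp_smul_const B s
    have hlin : HasDerivAt (fun s : ℝ => t - s) (0 - 1) s :=
      (hasDerivAt_const s t).sub (hasDerivAt_id s)
    have h3 : HasDerivAt (fun s : ℝ => exp ((t - s) • C))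
        (-(C * exp ((t - s) • C))) s := by
      have := HasDerivAt.scomp s (hasDerivAt_exp_smul_const' (𝕂 := ℝ) C (t - s)) hlin
      simpa [Function.comp_def] using this
    have := (h1.mul h2).mul h3
    convert this using 1
    · rfl
    simp only [hDdef, hCdef, Pi.mul_apply]
    noncomm_ring
  have hbound : ∀ s ∈ Set.Ico (0:ℝ) t, ‖D s‖ ≤ K * s := by
    intro s hs
    have hs' : s ∈ Set.Icc (0:ℝ) t := ⟨hs.1, hs.2.le⟩
    have h1 : ‖exp (s • A)‖ ≤ 1 := hA s hs'
    have h3 : ‖exp ((t - s) • C)‖ ≤ 1 := hAB (t - s) ⟨by linarith [hs.2.le], by linarith [hs.1]⟩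
    have h2 := inner s hs'
    calc ‖D s‖ ≤ ‖exp (s • A) * (A * exp (s • B) - exp (s • B) * A)‖ *
          ‖exp ((t - s) • C)‖ := norm_mul_le _ _
      _ ≤ ‖exp (s • A)‖ * ‖A * exp (s • B) - exp (s • B) * A‖ *
          ‖exp ((t - s) • C)‖ := by gcongr; exact norm_mul_le _ _
      _ ≤ 1 * (s * K) * 1 := by
          have hK0 : (0:ℝ) ≤ K := hKdef ▸ norm_nonneg _
          exact mul_le_mul (mul_le_mul h1 h2 (norm_nonneg _) zero_le_one) h3 (norm_nonneg _)
            (mul_nonneg zero_le_one (mul_nonneg hs.1 hK0))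
      _ = K * s := by ring
  have hBder : ∀ x : ℝ, HasDerivAt (fun s : ℝ => K * (s ^ 2 / 2)) (K * x) x := by
    intro x
    have := ((hasDerivAt_pow 2 x).div_const 2).const_mul K
    convert this using 1
    · rfl
    · rfl
    ring
  have main := image_norm_le_of_norm_deriv_right_le_deriv_boundary
    (f := fun s => F s - F 0) (f' := D) (a := 0) (b := t)
    (B := fun s => K * (s ^ 2 / 2)) (B' := fun s => K * s)
    (fun x _ => ((hF x).sub_const (F 0)).continuousAt.continuousWithinAt)
    (fun x _ => ((hF x).sub_const (F 0)).hasDerivWithinAt)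
    (by simp)
    hBder
    hbound
    (Set.right_mem_Icc.2 ht)
  have hFt : F t = exp (t • A) * exp (t • B) := by simp [hFdef]
  have hF0 : F 0 = exp (t • C) := by simp [hFdef]
  rw [hFt, hF0] at main
  linarith
end

section
/- For bounded operators A, B, if μ is a real number with ‖exp(s(A+B))‖ ≤ exp(sμ) for s ∈ [0,t] and ω ≥ 0 satisfies ‖exp(sA)‖·‖exp(ξB)‖ ≤ exp((s+ξ)(μ+ω)) appropriately, then ‖exp(tA)exp(tB) − exp(t(A+B))‖ ≤ exp(tμ) · (1 − (1 − ωt)exp(ωt))/ω² · ‖[A,B]‖ when ω > 0. -/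
open NormedSpace intervalIntegral MeasureTheory

section LieTrotterAux

variable {𝔸 : Type*} [NormedRing 𝔸] [NormedAlgebra ℝ 𝔸] [CompleteSpace 𝔸]

private lemma exp_smul_continuous' (A : 𝔸) : Continuous fun s : ℝ => exp (s • A) :=
  (by
    rw [← continuousOn_univ, ← Metric.eball_top_eq_univ (0 : 𝔸), ← expSeries_radius_eq_top ℝ 𝔸]
    exact continuousOn_exp : Continuous (exp : 𝔸 → 𝔸)).comp (continuous_id.smul continuous_const)

private lemma hasDerivAt_exp_rev' (A : 𝔸) (t ξ : ℝ) :
    HasDerivAt (fun u : ℝ => exp ((t - u) • A)) (-(A * exp ((t - ξ) • A))) ξ := by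
  have h1 : HasDerivAt (fun u : ℝ => t - u) (-1) ξ := by
    simpa using (hasDerivAt_id ξ).const_sub t
  simpa [Function.comp_def] using (hasDerivAt_exp_smul_const' A (t - ξ)).scomp ξ h1

private lemma comm_int' (A B : 𝔸) (s : ℝ) :
    A * exp (s • B) - exp (s • B) * A
      = ∫ ξ in (0:ℝ)..s, exp (ξ • B) * (A * B - B * A) * exp ((s - ξ) • B) := by
  have key : ∀ ξ ∈ Set.uIcc (0:ℝ) s,
      HasDerivAt (fun u : ℝ => exp (u • B) * (A * exp ((s - u) • B)))
        (-(exp (ξ • B) * (A * B - B * A) * exp ((s - ξ) • B))) ξ := by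
    intro ξ _
    have h1 := hasDerivAt_exp_smul_const B ξ
    have h2 : HasDerivAt (fun u : ℝ => A * exp ((s - u) • B))
        (A * -(B * exp ((s - ξ) • B))) ξ := (hasDerivAt_exp_rev' B s ξ).const_mul A
    have := h1.mul h2
    convert this using 1
    · rfl
    · noncomm_ring
  have hcont : ContinuousOn
      (fun ξ : ℝ => -(exp (ξ • B) * (A * B - B * A) * exp ((s - ξ) • B)))
      (Set.uIcc (0:ℝ) s) :=
    (((exp_smul_continuous' B).mul continuous_const).mul
      ((exp_smul_continuous' B).comp (continuous_const.sub continuous_id))).neg.continuousOn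
  have h := integral_eq_sub_of_hasDerivAt key (hcont.intervalIntegrable)
  rw [intervalIntegral.integral_neg] at h
  simp only [zero_smul, sub_zero, sub_self, exp_zero, one_mul, mul_one] at h
  have h2 := congrArg Neg.neg h
  rw [neg_neg, neg_sub] at h2
  rw [← h2]

private lemma comm_norm_bound' (A B : 𝔸) (μB : ℝ)
    (hB : ∀ s : ℝ, 0 ≤ s → ‖exp (s • B)‖ ≤ Real.exp (s * μB)) (s : ℝ) (hs : 0 ≤ s) :
    ‖A * exp (s • B) - exp (s • B) * A‖
      ≤ Real.exp (s * μB) * ‖A * B - B * A‖ * s := by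
  rw [comm_int']
  have h := intervalIntegral.norm_integral_le_of_norm_le_const (a := 0) (b := s)
    (C := Real.exp (s * μB) * ‖A * B - B * A‖)
    (f := fun ξ => exp (ξ • B) * (A * B - B * A) * exp ((s - ξ) • B)) ?_
  · calc _ ≤ Real.exp (s * μB) * ‖A * B - B * A‖ * |s - 0| := h
      _ = _ := by rw [sub_zero, abs_of_nonneg hs]
  · intro ξ hξ
    rw [Set.uIoc_of_le hs] at hξ
    obtain ⟨h1, h2⟩ := hξ
    calc ‖exp (ξ • B) * (A * B - B * A) * exp ((s - ξ) • B)‖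
        ≤ ‖exp (ξ • B)‖ * ‖A * B - B * A‖ * ‖exp ((s - ξ) • B)‖ :=
          (norm_mul_le _ _).trans (by gcongr; exact norm_mul_le _ _)
      _ ≤ Real.exp (ξ * μB) * ‖A * B - B * A‖ * Real.exp ((s - ξ) * μB) := by
          gcongr
          · exact hB ξ h1.le
          · exact hB _ (by linarith)
      _ = Real.exp (s * μB) * ‖A * B - B * A‖ := by
          rw [mul_right_comm, ← Real.exp_add]; ring_nf

private lemma trotter_diff_eq' (A B : 𝔸) (t : ℝ) :
    exp (t • A) * exp (t • B) - exp (t • (A + B))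
      = ∫ s in (0:ℝ)..t,
          exp (s • A) * (A * exp (s • B) - exp (s • B) * A)
            * exp ((t - s) • (A + B)) := by
  have key : ∀ s ∈ Set.uIcc (0:ℝ) t,
      HasDerivAt (fun u : ℝ => exp (u • A) * exp (u • B) * exp ((t - u) • (A + B)))
        (exp (s • A) * (A * exp (s • B) - exp (s • B) * A)
          * exp ((t - s) • (A + B))) s := by
    intro s _
    have h1 := hasDerivAt_exp_smul_const A s
    have h2 := hasDerivAt_exp_smul_const B s
    have h3 := hasDerivAt_exp_rev' (A + B) t s
    have := (h1.mul h2).mul h3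
    convert this using 1
    · rfl
    · simp only [Pi.mul_apply]
      noncomm_ring
  have hcont : ContinuousOn
      (fun s : ℝ => exp (s • A) * (A * exp (s • B) - exp (s • B) * A)
        * exp ((t - s) • (A + B))) (Set.uIcc (0:ℝ) t) :=
    (((exp_smul_continuous' A).mul
        ((continuous_const.mul (exp_smul_continuous' B)).sub
          ((exp_smul_continuous' B).mul continuous_const))).mul
      ((exp_smul_continuous' (A + B)).comp (continuous_const.sub continuous_id))).continuousOn
  have h := integral_eq_sub_of_hasDerivAt key (hcont.intervalIntegrable)
  rw [h]
  simp [sub_self]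

private lemma int_s_exp (ω t : ℝ) (hω : ω ≠ 0) :
    ∫ s in (0:ℝ)..t, s * Real.exp (ω * s)
      = (1 - (1 - ω * t) * Real.exp (ω * t)) / ω ^ 2 := by
  have key : ∀ s ∈ Set.uIcc (0:ℝ) t,
      HasDerivAt (fun s : ℝ => (ω * s - 1) * Real.exp (ω * s) / ω ^ 2)
        (s * Real.exp (ω * s)) s := by
    intro s _
    have hexp : HasDerivAt (fun s : ℝ => Real.exp (ω * s)) (ω * Real.exp (ω * s)) s := by
      simpa [mul_comm, Function.comp_def] using (Real.hasDerivAt_exp (ω * s)).comp s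
        ((hasDerivAt_id s).const_mul ω)
    have hlin : HasDerivAt (fun s : ℝ => ω * s - 1) ω s := by
      simpa using ((hasDerivAt_id s).const_mul ω).sub_const 1
    have := (hlin.mul hexp).div_const (ω ^ 2)
    convert this using 1
    · rfl
    · rfl
    · rfl
    · rw [eq_div_iff (pow_ne_zero 2 hω)]
      ring
  have hcont : ContinuousOn (fun s : ℝ => s * Real.exp (ω * s)) (Set.uIcc (0:ℝ) t) :=
    (continuous_id.mul (Real.continuous_exp.comp (continuous_const.mul continuous_id))).continuousOn
  rw [integral_eq_sub_of_hasDerivAt key hcont.intervalIntegrable]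
  simp only [mul_zero, Real.exp_zero]
  field_simp
  ring

end LieTrotterAux

theorem lieTrotter_log_norm_bound {𝔸 : Type*} [NormedRing 𝔸] [NormedAlgebra ℝ 𝔸]
    [CompleteSpace 𝔸] (A B : 𝔸) (μA μB μAB : ℝ)
    (hA : ∀ s : ℝ, 0 ≤ s → ‖exp (s • A)‖ ≤ Real.exp (s * μA))
    (hB : ∀ s : ℝ, 0 ≤ s → ‖exp (s • B)‖ ≤ Real.exp (s * μB))
    (hAB : ∀ s : ℝ, 0 ≤ s → ‖exp (s • (A + B))‖ ≤ Real.exp (s * μAB))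
    (hω : 0 < μA + μB - μAB) (t : ℝ) (ht : 0 ≤ t) :
    ‖exp (t • A) * exp (t • B) - exp (t • (A + B))‖
      ≤ Real.exp (t * μAB)
        * ((1 - (1 - (μA + μB - μAB) * t) * Real.exp ((μA + μB - μAB) * t))
            / (μA + μB - μAB) ^ 2)
        * ‖A * B - B * A‖ := by
  set ω : ℝ := μA + μB - μAB with hωdef
  set C : ℝ := ‖A * B - B * A‖ with hCdef
  have hC : 0 ≤ C := norm_nonneg _
  rw [trotter_diff_eq']
  set g : ℝ → ℝ := fun s => (Real.exp (t * μAB) * C) * (s * Real.exp (ω * s)) with hgdef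
  have hgcont : Continuous g :=
    continuous_const.mul (continuous_id.mul
      (Real.continuous_exp.comp (continuous_const.mul continuous_id)))
  have hbound : ∀ s ∈ Set.uIoc (0:ℝ) t,
      ‖exp (s • A) * (A * exp (s • B) - exp (s • B) * A)
        * exp ((t - s) • (A + B))‖ ≤ g s := by
    intro s hs
    rw [Set.uIoc_of_le ht] at hs
    obtain ⟨hs0, hst⟩ := hs
    calc ‖exp (s • A) * (A * exp (s • B) - exp (s • B) * A)
        * exp ((t - s) • (A + B))‖
        ≤ ‖exp (s • A)‖ * ‖A * exp (s • B) - exp (s • B) * A‖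
            * ‖exp ((t - s) • (A + B))‖ :=
          (norm_mul_le _ _).trans (by gcongr; exact norm_mul_le _ _)
      _ ≤ Real.exp (s * μA) * (Real.exp (s * μB) * C * s) * Real.exp ((t - s) * μAB) := by
          gcongr
          · exact hA s hs0.le
          · exact comm_norm_bound' A B μB hB s hs0.le
          · exact hAB _ (by linarith)
      _ = Real.exp (s * μA + s * μB + (t - s) * μAB) * (C * s) := by
          rw [Real.exp_add, Real.exp_add]; ring
      _ = g s := by
          rw [show s * μA + s * μB + (t - s) * μAB = t * μAB + ω * s by rw [hωdef]; ring,
            Real.exp_add, hgdef]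
          ring
  have hnorm := intervalIntegral.norm_integral_le_of_norm_le (a := 0) (b := t) ht
    (μ := volume)
    (f := fun s => exp (s • A) * (A * exp (s • B) - exp (s • B) * A)
      * exp ((t - s) • (A + B))) (g := g)
    (Filter.Eventually.of_forall fun s hs => hbound s (by rwa [Set.uIoc_of_le ht]))
    (hgcont.intervalIntegrable 0 t)
  have hint : ∫ s in (0:ℝ)..t, g s
      = (Real.exp (t * μAB) * C) * ((1 - (1 - ω * t) * Real.exp (ω * t)) / ω ^ 2) := by
    rw [hgdef, intervalIntegral.integral_const_mul, int_s_exp ω t (ne_of_gt hω)]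
  have hnn : 0 ≤ ∫ s in (0:ℝ)..t, g s := by
    apply intervalIntegral.integral_nonneg ht
    intro u hu
    have : 0 ≤ u := hu.1
    positivity
  calc _ ≤ |∫ s in (0:ℝ)..t, g s| := hnorm.trans (le_abs_self _)
    _ = ∫ s in (0:ℝ)..t, g s := abs_of_nonneg hnn
    _ = _ := by rw [hint]; ring
end

section
/- For bounded operators A, B, the Strang splitting error admits the representation exp((t/2)A)exp(tB)exp((t/2)A) − exp(t(A+B)) = −(1/4)∫₀^t exp((t−τ)(A+B)) exp((τ/2)A) ( ∫₀^τ (τ−η)( exp(−(η/2)A)[A,[A,B]]exp((η/2)A) + 2 exp(ηB)[B,[A,B]]exp(−ηB) ) dη ) exp(τB) exp((τ/2)A) dτ. -/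
open NormedSpace

set_option linter.unusedSectionVars false
section Helpers
variable {𝔸 : Type*} [NormedRing 𝔸] [NormedAlgebra ℝ 𝔸] [CompleteSpace 𝔸]

lemma exp_cancel (u v : ℝ) (X : 𝔸) (h : u + v = 0) :
    exp (u • X) * exp (v • X) = 1 := by
  rw [← exp_add_of_commute_of_mem_ball (𝕂 := ℝ) (((Commute.refl X).smul_left u).smul_right v)
      (by simp [expSeries_radius_eq_top]) (by simp [expSeries_radius_eq_top]),
    ← add_smul, h, zero_smul, exp_zero]

lemma cont_exp_smul_s11 {f : ℝ → ℝ} (hf : Continuous f) (X : 𝔸) :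
    Continuous fun u : ℝ => exp (f u • X) :=
  (continuousOn_univ.mp (by
    rw [← Metric.eball_top_eq_univ (0 : 𝔸), ← expSeries_radius_eq_top ℝ 𝔸]
    exact continuousOn_exp)).comp (hf.smul continuous_const)

lemma hasDerivAt_exp_lin (X : 𝔸) (c s : ℝ) :
    HasDerivAt (fun u : ℝ => exp ((c * u) • X)) (c • (exp ((c * s) • X) * X)) s := by
  simpa [Function.comp_def] using (hasDerivAt_exp_smul_const X (c*s)).scomp s
    ((hasDerivAt_id s).const_mul c)

lemma hasDerivAt_exp_lin' (X : 𝔸) (c s : ℝ) :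
    HasDerivAt (fun u : ℝ => exp ((c * u) • X)) (c • (X * exp ((c * s) • X))) s := by
  simpa [Function.comp_def] using (hasDerivAt_exp_smul_const' X (c*s)).scomp s
    ((hasDerivAt_id s).const_mul c)

lemma hasDerivAt_conj (X C : 𝔸) (c s : ℝ) :
    HasDerivAt (fun u : ℝ => exp ((c * u) • X) * C * exp ((-c * u) • X))
      (c • (exp ((c * s) • X) * (X * C - C * X) * exp ((-c * s) • X))) s := by
  have h := ((hasDerivAt_exp_lin X c s).mul_const C).mul (hasDerivAt_exp_lin X (-c) s)
  convert h using 1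
  · rfl
  have hc : exp ((-c * s) • X) * X = X * exp ((-c * s) • X) :=
    (((Commute.refl X).smul_left (-c*s)).exp_left).eq
  rw [mul_assoc, hc, ← mul_assoc]
  simp only [smul_mul_assoc, mul_smul_comm, mul_sub, sub_mul, smul_sub, mul_assoc, neg_smul,
    mul_neg, neg_neg, smul_neg]
  abel

lemma hasDerivAt_congr_fun {f g : ℝ → 𝔸} {d : 𝔸} {x : ℝ} (h : HasDerivAt f d x)
    (he : ∀ y, g y = f y) : HasDerivAt g d x :=
  h.congr_of_eventuallyEq (Filter.Eventually.of_forall he)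

noncomputable def kfun (A B : 𝔸) (η : ℝ) : 𝔸 :=
  exp ((-η / 2) • A) * (A * (A * B - B * A) - (A * B - B * A) * A) * exp ((η / 2) • A)
    + (2 : ℝ) • (exp (η • B) * (B * (A * B - B * A) - (A * B - B * A) * B) * exp ((-η) • B))

noncomputable def Gfun (A B : 𝔸) (τ : ℝ) : 𝔸 :=
  B + (2⁻¹ : ℝ) • (exp (τ • B) * A * exp ((-τ) • B)) - (2⁻¹ : ℝ) • A
    - exp ((-τ / 2) • A) * B * exp ((τ / 2) • A)

noncomputable def Gd (A B : 𝔸) (τ : ℝ) : 𝔸 :=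
  (2⁻¹ : ℝ) • (exp (τ • B) * (B * A - A * B) * exp ((-τ) • B))
    + (2⁻¹ : ℝ) • (exp ((-τ / 2) • A) * (A * B - B * A) * exp ((τ / 2) • A))

lemma conj1 (X C : 𝔸) (s : ℝ) :
    HasDerivAt (fun u : ℝ => exp (u • X) * C * exp ((-u) • X))
      (exp (s • X) * (X * C - C * X) * exp ((-s) • X)) s := by
  have h := hasDerivAt_conj X C 1 s
  simp only [one_mul, neg_mul, one_smul] at h
  exact hasDerivAt_congr_fun h (fun y => by norm_num)

lemma conj2 (X C : 𝔸) (s : ℝ) :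
    HasDerivAt (fun u : ℝ => exp ((-u / 2) • X) * C * exp ((u / 2) • X))
      ((-2⁻¹ : ℝ) • (exp ((-s / 2) • X) * (X * C - C * X) * exp ((s / 2) • X))) s := by
  have h := hasDerivAt_conj X C (-2⁻¹) s
  have e1 : ∀ u : ℝ, (-2⁻¹ * u : ℝ) = -u / 2 := fun u => by ring
  have e2 : ∀ u : ℝ, (-(-2⁻¹) * u : ℝ) = u / 2 := fun u => by ring
  simp only [e1, e2] at h
  exact h

lemma Gfun_hasDerivAt (A B : 𝔸) (τ : ℝ) : HasDerivAt (Gfun A B) (Gd A B τ) τ := by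
  have h1 := (conj1 B A τ).const_smul (2⁻¹ : ℝ)
  have h2 := conj2 A B τ
  have h := (((hasDerivAt_const τ B).add h1).sub (hasDerivAt_const τ ((2⁻¹ : ℝ) • A))).sub h2
  refine HasDerivAt.congr_deriv (hasDerivAt_congr_fun h fun y => by simp [Gfun]) ?_
  simp only [Gd, zero_add, sub_zero, neg_smul]
  module

lemma Gd_hasDerivAt (A B : 𝔸) (τ : ℝ) :
    HasDerivAt (Gd A B) ((-(4⁻¹ : ℝ)) • kfun A B τ) τ := by
  have h1 := (conj1 B (B * A - A * B) τ).const_smul (2⁻¹ : ℝ)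
  have h2 := (conj2 A (A * B - B * A) τ).const_smul (2⁻¹ : ℝ)
  have h := h1.add h2
  refine HasDerivAt.congr_deriv (hasDerivAt_congr_fun h fun y => by simp [Gd]) ?_
  simp only [kfun]
  have : B * (B * A - A * B) - (B * A - A * B) * B
      = -(B * (A * B - B * A) - (A * B - B * A) * B) := by noncomm_ring
  rw [this]
  simp only [mul_neg, neg_mul, smul_neg]
  module

noncomputable def Kfun (A B : 𝔸) (σ : ℝ) : 𝔸 := ∫ η in (0:ℝ)..σ, kfun A B η

noncomputable def Psi (A B : 𝔸) (τ : ℝ) : 𝔸 := ∫ η in (0:ℝ)..τ, (τ - η) • kfun A B η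

lemma kfun_cont (A B : 𝔸) : Continuous (kfun A B) := by
  unfold kfun
  exact (((cont_exp_smul_s11 (by fun_prop) A).mul continuous_const).mul
      (cont_exp_smul_s11 (by fun_prop) A)).add
    ((((cont_exp_smul_s11 (by fun_prop) B).mul continuous_const).mul
      (cont_exp_smul_s11 (by fun_prop) B)).const_smul (2:ℝ))

lemma Kfun_hasDerivAt (A B : 𝔸) (τ : ℝ) : HasDerivAt (Kfun A B) (kfun A B τ) τ :=
  ((kfun_cont A B).integral_hasStrictDerivAt 0 τ).hasDerivAt

lemma Gd_eq (A B : 𝔸) (τ : ℝ) : Gd A B τ = (-(4⁻¹ : ℝ)) • Kfun A B τ := by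
  have hV : ∀ s : ℝ, HasDerivAt (fun s => Gd A B s + (4⁻¹ : ℝ) • Kfun A B s) 0 s := by
    intro s
    have h := (Gd_hasDerivAt A B s).add ((Kfun_hasDerivAt A B s).const_smul (4⁻¹ : ℝ))
    refine h.congr_deriv ?_
    module
  have hconst := is_const_of_deriv_eq_zero (fun x => (hV x).differentiableAt)
    (fun x => (hV x).deriv) τ 0
  have h0 : Gd A B 0 + (4⁻¹ : ℝ) • Kfun A B 0 = 0 := by
    simp only [Gd, Kfun, intervalIntegral.integral_same, smul_zero, add_zero, neg_zero,
      zero_div, zero_smul, exp_zero, one_mul, mul_one]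
    module
  rw [h0] at hconst
  have := hconst
  -- Gd τ + 4⁻¹ • K τ = 0
  have : Gd A B τ = -((4⁻¹ : ℝ) • Kfun A B τ) := by
    rw [eq_neg_iff_add_eq_zero]; exact hconst
  rw [this]; module

lemma Psi_eq (A B : 𝔸) (τ : ℝ) :
    Psi A B τ = τ • Kfun A B τ - ∫ η in (0:ℝ)..τ, η • kfun A B η := by
  unfold Psi Kfun
  have : ∀ η : ℝ, (τ - η) • kfun A B η = τ • kfun A B η - η • kfun A B η :=
    fun η => sub_smul τ η (kfun A B η)
  rw [intervalIntegral.integral_congr (g := fun η => τ • kfun A B η - η • kfun A B η)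
    (fun η _ => this η)]
  have hc : Continuous (fun η : ℝ => η • kfun A B η) := continuous_id.smul (kfun_cont A B)
  rw [intervalIntegral.integral_sub (f := fun η => τ • kfun A B η)
    (((kfun_cont A B).const_smul τ).intervalIntegrable 0 τ)
    (hc.intervalIntegrable 0 τ), intervalIntegral.integral_smul]

lemma Psi_hasDerivAt (A B : 𝔸) (τ : ℝ) : HasDerivAt (Psi A B) (Kfun A B τ) τ := by
  have h1 : HasDerivAt (fun s : ℝ => s • Kfun A B s)
      (τ • kfun A B τ + (1:ℝ) • Kfun A B τ) τ :=
    (hasDerivAt_id τ).smul (Kfun_hasDerivAt A B τ)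
  have hc : Continuous (fun η : ℝ => η • kfun A B η) := continuous_id.smul (kfun_cont A B)
  have h2 : HasDerivAt (fun s : ℝ => ∫ η in (0:ℝ)..s, η • kfun A B η) (τ • kfun A B τ) τ :=
    (hc.integral_hasStrictDerivAt 0 τ).hasDerivAt
  have h := h1.sub h2
  refine HasDerivAt.congr_deriv (hasDerivAt_congr_fun h fun y => (Psi_eq A B y)) ?_
  module

lemma Psi_zero (A B : 𝔸) : Psi A B 0 = 0 := by
  simp [Psi, intervalIntegral.integral_same]

lemma Gfun_eq (A B : 𝔸) (τ : ℝ) : Gfun A B τ = (-(4⁻¹ : ℝ)) • Psi A B τ := by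
  have hV : ∀ s : ℝ, HasDerivAt (fun s => Gfun A B s + (4⁻¹ : ℝ) • Psi A B s) 0 s := by
    intro s
    have h := (Gfun_hasDerivAt A B s).add ((Psi_hasDerivAt A B s).const_smul (4⁻¹ : ℝ))
    refine h.congr_deriv ?_
    rw [Gd_eq]
    module
  have hconst := is_const_of_deriv_eq_zero (fun x => (hV x).differentiableAt)
    (fun x => (hV x).deriv) τ 0
  have h0 : Gfun A B 0 + (4⁻¹ : ℝ) • Psi A B 0 = 0 := by
    simp only [Gfun, Psi_zero, smul_zero, add_zero, neg_zero, zero_div, zero_smul,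
      exp_zero, one_mul, mul_one]
    module
  rw [h0] at hconst
  have : Gfun A B τ = -((4⁻¹ : ℝ) • Psi A B τ) := by
    rw [eq_neg_iff_add_eq_zero]; exact hconst
  rw [this]; module

lemma P_hasDerivAt (A B : 𝔸) (t τ : ℝ) :
    HasDerivAt (fun s : ℝ =>
        exp ((t - s) • (A + B)) * (exp ((s / 2) • A) * exp (s • B) * exp ((s / 2) • A)))
      (exp ((t - τ) • (A + B)) * exp ((τ / 2) • A) * Gfun A B τ * exp (τ • B)
        * exp ((τ / 2) • A)) τ := by
  have hE : HasDerivAt (fun s : ℝ => exp ((t - s) • (A + B)))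
      ((-1 : ℝ) • (exp ((t - τ) • (A + B)) * (A + B))) τ := by
    simpa [Function.comp_def] using (hasDerivAt_exp_smul_const (A + B) (t - τ)).scomp τ ((hasDerivAt_id τ).const_sub t)
  have e : ∀ u : ℝ, (2⁻¹ * u : ℝ) = u / 2 := fun u => by ring
  have he1l : HasDerivAt (fun s : ℝ => exp ((s / 2) • A))
      ((2⁻¹ : ℝ) • (A * exp ((τ / 2) • A))) τ := by
    have h := hasDerivAt_exp_lin' A 2⁻¹ τ; simp only [e] at h; exact h
  have he1r : HasDerivAt (fun s : ℝ => exp ((s / 2) • A))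
      ((2⁻¹ : ℝ) • (exp ((τ / 2) • A) * A)) τ := by
    have h := hasDerivAt_exp_lin A 2⁻¹ τ; simp only [e] at h; exact h
  have he2 : HasDerivAt (fun s : ℝ => exp (s • B)) (B * exp (τ • B)) τ :=
    hasDerivAt_exp_smul_const' B τ
  have h := hE.mul ((he1l.mul he2).mul he1r)
  refine h.congr_deriv ?_
  have hi1 : ∀ x : 𝔸, exp ((τ / 2) • A) * (exp ((-τ / 2) • A) * x) = x := fun x => by
    rw [← mul_assoc, exp_cancel _ _ _ (by ring), one_mul]
  have hi2 : ∀ x : 𝔸, exp (-(τ • B)) * (exp (τ • B) * x) = x := fun x => by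
    rw [← neg_smul, ← mul_assoc, exp_cancel _ _ _ (by ring), one_mul]
  have hA2 : A * exp ((τ / 2) • A) = exp ((τ / 2) • A) * A :=
    (((Commute.refl A).smul_left (τ / 2)).exp_left).symm.eq
  have hA1 : ∀ x : 𝔸, A * (exp ((τ / 2) • A) * x) = exp ((τ / 2) • A) * (A * x) :=
    fun x => by rw [← mul_assoc, hA2, mul_assoc]
  simp only [Gfun, Pi.mul_apply, mul_add, add_mul, mul_sub, sub_mul, smul_mul_assoc, mul_smul_comm,
    mul_assoc, hi1, hi2, hA1, hA2, neg_smul, one_smul, neg_mul, mul_neg]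
  module

lemma Gfun_cont (A B : 𝔸) : Continuous (Gfun A B) := by
  unfold Gfun
  exact ((continuous_const.add ((((cont_exp_smul_s11 (by fun_prop) B).mul continuous_const).mul
    (cont_exp_smul_s11 (by fun_prop) B)).const_smul (2⁻¹:ℝ))).sub continuous_const).sub
    (((cont_exp_smul_s11 (by fun_prop) A).mul continuous_const).mul (cont_exp_smul_s11 (by fun_prop) A))

end Helpers

theorem strang_error_integral {𝔸 : Type*} [NormedRing 𝔸] [NormedAlgebra ℝ 𝔸]
    [CompleteSpace 𝔸] (A B : 𝔸) (t : ℝ) (ht : 0 ≤ t) :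
    exp ((t / 2) • A) * exp (t • B) * exp ((t / 2) • A) - exp (t • (A + B))
      = (-(1 / 4) : ℝ) • ∫ τ in (0:ℝ)..t,
          exp ((t - τ) • (A + B)) * exp ((τ / 2) • A)
            * (∫ η in (0:ℝ)..τ, (τ - η) •
                (exp ((-η / 2) • A)
                    * (A * (A * B - B * A) - (A * B - B * A) * A) * exp ((η / 2) • A)
                  + (2 : ℝ) • (exp (η • B)
                    * (B * (A * B - B * A) - (A * B - B * A) * B) * exp ((-η) • B))))
            * exp (τ • B) * exp ((τ / 2) • A) := by
  have hΦc : Continuous (fun τ : ℝ => exp ((t - τ) • (A + B)) * exp ((τ / 2) • A)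
      * Gfun A B τ * exp (τ • B) * exp ((τ / 2) • A)) :=
    ((((cont_exp_smul_s11 (by fun_prop) (A + B)).mul (cont_exp_smul_s11 (by fun_prop) A)).mul
      (Gfun_cont A B)).mul (cont_exp_smul_s11 (by fun_prop) B)).mul (cont_exp_smul_s11 (by fun_prop) A)
  have h1 : (∫ τ in (0:ℝ)..t, exp ((t - τ) • (A + B)) * exp ((τ / 2) • A)
        * Gfun A B τ * exp (τ • B) * exp ((τ / 2) • A))
      = exp ((t / 2) • A) * exp (t • B) * exp ((t / 2) • A) - exp (t • (A + B)) := by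
    rw [intervalIntegral.integral_eq_sub_of_hasDerivAt
      (fun τ _ => P_hasDerivAt A B t τ) (hΦc.intervalIntegrable 0 t)]
    simp [sub_self, zero_smul, exp_zero, zero_div, mul_assoc]
  have h2 : ∀ τ : ℝ, exp ((t - τ) • (A + B)) * exp ((τ / 2) • A)
        * Gfun A B τ * exp (τ • B) * exp ((τ / 2) • A)
      = (-(1 / 4) : ℝ) • (exp ((t - τ) • (A + B)) * exp ((τ / 2) • A)
        * Psi A B τ * exp (τ • B) * exp ((τ / 2) • A)) := by
    intro τ
    rw [Gfun_eq]
    rw [show (-(4⁻¹ : ℝ)) = (-(1/4) : ℝ) by norm_num]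
    simp only [smul_mul_assoc, mul_smul_comm]
  rw [← h1, intervalIntegral.integral_congr (g := fun τ : ℝ =>
      (-(1 / 4) : ℝ) • (exp ((t - τ) • (A + B)) * exp ((τ / 2) • A)
        * Psi A B τ * exp (τ • B) * exp ((τ / 2) • A))) (fun τ _ => h2 τ),
    intervalIntegral.integral_smul]
  simp only [Psi, kfun]
end

section
/- For n×n complex matrices A, B, the function t ↦ (exp(tA)exp(tB) + exp(tB)exp(tA))/2 − exp(t(A+B)) has vanishing derivatives up to order 2 at t = 0, and its third derivative at 0 equals (1/2)[A−B,[A,B]] (so the palindromic Lie–Trotter error is (t³/12)[A−B,[A,B]] + O(t⁴)). -/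
open NormedSpace

section Helpers

variable {𝔸 : Type*} [NormedRing 𝔸] [NormedAlgebra ℝ 𝔸] [CompleteSpace 𝔸]

/-- building block: exp(tA) Aʲ exp(tB) Bᵏ -/
noncomputable def FFaux (A B : 𝔸) (j k : ℕ) (t : ℝ) : 𝔸 :=
  exp (t • A) * A ^ j * (exp (t • B) * B ^ k)

lemma hasDerivAt_FFaux (A B : 𝔸) (j k : ℕ) (t : ℝ) :
    HasDerivAt (fun t => FFaux A B j k t) (FFaux A B (j+1) k t + FFaux A B j (k+1) t) t := by
  have h1 : HasDerivAt (fun t : ℝ => exp (t • A) * A ^ j)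
      (exp (t • A) * A ^ (j+1)) t := by
    have := (hasDerivAt_exp_smul_const (𝕂 := ℝ) A t).mul_const (A ^ j)
    simpa [mul_assoc, pow_succ'] using this
  have h2 : HasDerivAt (fun t : ℝ => exp (t • B) * B ^ k)
      (exp (t • B) * B ^ (k+1)) t := by
    have := (hasDerivAt_exp_smul_const (𝕂 := ℝ) B t).mul_const (B ^ k)
    simpa [mul_assoc, pow_succ'] using this
  simpa [FFaux, Pi.mul_def] using h1.mul h2

lemma hasDerivAt_GG (A : 𝔸) (j : ℕ) (t : ℝ) :
    HasDerivAt (fun t : ℝ => exp (t • A) * A ^ j) (exp (t • A) * A ^ (j+1)) t := by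
  have := (hasDerivAt_exp_smul_const (𝕂 := ℝ) A t).mul_const (A ^ j)
  simpa [mul_assoc, pow_succ'] using this

lemma FFaux_zero (A B : 𝔸) (j k : ℕ) : FFaux A B j k 0 = A ^ j * B ^ k := by
  simp [FFaux]

end Helpers

theorem palindromic_lieTrotter_taylor {𝔸 : Type*} [NormedRing 𝔸] [NormedAlgebra ℝ 𝔸]
    [CompleteSpace 𝔸] (A B : 𝔸) :
    (iteratedDeriv 1 (fun t : ℝ => (1 / 2 : ℝ) • (exp (t • A) * exp (t • B)
        + exp (t • B) * exp (t • A)) - exp (t • (A + B))) 0 = 0) ∧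
    (iteratedDeriv 2 (fun t : ℝ => (1 / 2 : ℝ) • (exp (t • A) * exp (t • B)
        + exp (t • B) * exp (t • A)) - exp (t • (A + B))) 0 = 0) ∧
    (iteratedDeriv 3 (fun t : ℝ => (1 / 2 : ℝ) • (exp (t • A) * exp (t • B)
        + exp (t • B) * exp (t • A)) - exp (t • (A + B))) 0
      = (1 / 2 : ℝ) • ((A - B) * (A * B - B * A) - (A * B - B * A) * (A - B))) := by
  set f0 : ℝ → 𝔸 := fun t => (1 / 2 : ℝ) • (FFaux A B 0 0 t + FFaux B A 0 0 t)
      - exp (t • (A + B)) * (A + B) ^ 0 with hf0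
  set f1 : ℝ → 𝔸 := fun t =>
      (1 / 2 : ℝ) • ((FFaux A B 1 0 t + FFaux A B 0 1 t) + (FFaux B A 1 0 t + FFaux B A 0 1 t))
      - exp (t • (A + B)) * (A + B) ^ 1 with hf1
  set f2 : ℝ → 𝔸 := fun t =>
      (1 / 2 : ℝ) • (((FFaux A B 2 0 t + FFaux A B 1 1 t) + (FFaux A B 1 1 t + FFaux A B 0 2 t))
        + ((FFaux B A 2 0 t + FFaux B A 1 1 t) + (FFaux B A 1 1 t + FFaux B A 0 2 t)))
      - exp (t • (A + B)) * (A + B) ^ 2 with hf2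
  set f3 : ℝ → 𝔸 := fun t =>
      (1 / 2 : ℝ) • ((((FFaux A B 3 0 t + FFaux A B 2 1 t) + (FFaux A B 2 1 t + FFaux A B 1 2 t))
          + ((FFaux A B 2 1 t + FFaux A B 1 2 t) + (FFaux A B 1 2 t + FFaux A B 0 3 t)))
        + (((FFaux B A 3 0 t + FFaux B A 2 1 t) + (FFaux B A 2 1 t + FFaux B A 1 2 t))
          + ((FFaux B A 2 1 t + FFaux B A 1 2 t) + (FFaux B A 1 2 t + FFaux B A 0 3 t))))
      - exp (t • (A + B)) * (A + B) ^ 3 with hf3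
  have horig : (fun t : ℝ => (1 / 2 : ℝ) • (exp (t • A) * exp (t • B)
        + exp (t • B) * exp (t • A)) - exp (t • (A + B))) = f0 := by
    funext t
    simp [hf0, FFaux, mul_assoc]
  have hd0 : deriv f0 = f1 := by
    funext t
    refine HasDerivAt.deriv ?_
    exact ((((hasDerivAt_FFaux A B 0 0 t).add (hasDerivAt_FFaux B A 0 0 t)).const_smul
      ((1:ℝ)/2)).sub (by simpa using hasDerivAt_GG (A + B) 0 t))
  have hd1 : deriv f1 = f2 := by
    funext t
    refine HasDerivAt.deriv ?_
    have p1 := (hasDerivAt_FFaux A B 1 0 t).add (hasDerivAt_FFaux A B 0 1 t)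
    have p2 := (hasDerivAt_FFaux B A 1 0 t).add (hasDerivAt_FFaux B A 0 1 t)
    exact ((p1.add p2).const_smul ((1:ℝ)/2)).sub (by simpa using hasDerivAt_GG (A + B) 1 t)
  have hd2 : deriv f2 = f3 := by
    funext t
    refine HasDerivAt.deriv ?_
    have p1 := ((hasDerivAt_FFaux A B 2 0 t).add (hasDerivAt_FFaux A B 1 1 t)).add
      ((hasDerivAt_FFaux A B 1 1 t).add (hasDerivAt_FFaux A B 0 2 t))
    have p2 := ((hasDerivAt_FFaux B A 2 0 t).add (hasDerivAt_FFaux B A 1 1 t)).add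
      ((hasDerivAt_FFaux B A 1 1 t).add (hasDerivAt_FFaux B A 0 2 t))
    exact ((p1.add p2).const_smul ((1:ℝ)/2)).sub (by simpa using hasDerivAt_GG (A + B) 2 t)
  rw [horig]
  refine ⟨?_, ?_, ?_⟩
  · rw [iteratedDeriv_one, hd0, hf1]
    simp only [FFaux_zero, pow_zero, pow_one, one_mul, mul_one, zero_smul, exp_zero]
    module
  · rw [show (2:ℕ) = 1 + 1 from rfl, iteratedDeriv_succ, iteratedDeriv_one, hd0, hd1, hf2]
    simp only [FFaux_zero, pow_zero, pow_one, one_mul, mul_one, zero_smul, exp_zero]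
    have h : A ^ 2 + A * B + (A * B + B ^ 2) + (B ^ 2 + B * A + (B * A + A ^ 2))
        = (A + B) ^ 2 + (A + B) ^ 2 := by noncomm_ring
    rw [h]
    module
  · rw [show (3:ℕ) = 1 + 1 + 1 from rfl, iteratedDeriv_succ, iteratedDeriv_succ,
      iteratedDeriv_one, hd0, hd1, hd2, hf3]
    simp only [FFaux_zero, pow_zero, pow_one, one_mul, mul_one, zero_smul, exp_zero]
    have h : A ^ 3 + A ^ 2 * B + (A ^ 2 * B + A * B ^ 2) + (A ^ 2 * B + A * B ^ 2 + (A * B ^ 2 + B ^ 3)) +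
          (B ^ 3 + B ^ 2 * A + (B ^ 2 * A + B * A ^ 2) + (B ^ 2 * A + B * A ^ 2 + (B * A ^ 2 + A ^ 3)))
        = ((A - B) * (A * B - B * A) - (A * B - B * A) * (A - B)) + ((A + B) ^ 3 + (A + B) ^ 3) := by
      noncomm_ring
    rw [h]
    module
end
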